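/- (Lossless expansion for LayerNorm.) Let D_S ≥ 1, D_T ≥ D_S, k = ⌊D_T/D_S⌋, r = D_T mod D_S, and η = √(k·D_S/D_T). Let μ, β ∈ ℝ^{D_S}, ε > 0, and let ζ ∈ ℝ^r be arbitrary. Define μ* ∈ ℝ^{D_T} by μ*[i] = η·μ[i mod D_S] for i < k·D_S and μ*[i] = η·ζ[i − k·D_S] otherwise; define β* = V_zero(β) and ε* = η²·ε. Then for every x ∈ ℝ^{D_S}, LN(V_avg(x); μ*, β*, ε*) = V_zero(LN(x; μ, β, ε)). -/

import Mathlib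

/-- Index bound for the tail part of an expansion from dimension `DS` to `DT`. -/
theorem sub_lt_mod (DS DT i : ℕ) (hDS : 0 < DS) (hi : i < DT) (h2 : DT / DS * DS ≤ i) :
    i - DT / DS * DS < DT % DS := by
  have h := Nat.div_add_mod' DT DS
  set m := DT / DS * DS
  omega

/-- Average expansion `V_avg` from `ℝ^{DS}` to `ℝ^{DT}`. -/
noncomputable def vAvg (DS DT : ℕ) (hDS : 0 < DS) (x : Fin DS → ℝ) : Fin DT → ℝ :=
  fun i => if i.val < DT / DS * DS then x ⟨i.val % DS, Nat.mod_lt _ hDS⟩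
           else (∑ j, x j) / (DS : ℝ)

/-- Zero expansion `V_zero` from `ℝ^{DS}` to `ℝ^{DT}`. -/
def vZero (DS DT : ℕ) (hDS : 0 < DS) (x : Fin DS → ℝ) : Fin DT → ℝ :=
  fun i => if i.val < DT / DS * DS then x ⟨i.val % DS, Nat.mod_lt _ hDS⟩ else 0

/-- Circular expansion `V_circ` from `ℝ^{DS}` to `ℝ^{DT}`. -/
def vCirc (DS DT : ℕ) (hDS : 0 < DS) (x : Fin DS → ℝ) : Fin DT → ℝ :=
  fun i => x ⟨i.val % DS, Nat.mod_lt _ hDS⟩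

/-- Mean of a vector. -/
noncomputable def meanV {D : ℕ} (x : Fin D → ℝ) : ℝ := (∑ i, x i) / (D : ℝ)

/-- Population variance of a vector. -/
noncomputable def varV {D : ℕ} (x : Fin D → ℝ) : ℝ := (∑ i, (x i - meanV x) ^ 2) / (D : ℝ)

/-- LayerNorm with scale `μ`, bias `β` and constant `ε`. -/
noncomputable def layerNorm {D : ℕ} (x μ β : Fin D → ℝ) (ε : ℝ) : Fin D → ℝ :=
  fun i => μ i * (x i - meanV x) / Real.sqrt (varV x + ε) + β i

/-- `η = √(⌊D_T/D_S⌋·D_S/D_T)`. -/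
noncomputable def eta (DS DT : ℕ) : ℝ :=
  Real.sqrt (((DT / DS * DS : ℕ) : ℝ) / (DT : ℝ))

/-- The expanded scale `μ*`: `μ*[i] = η·μ[i mod D_S]` for `i < ⌊D_T/D_S⌋·D_S`,
and `μ*[i] = η·ζ[i − ⌊D_T/D_S⌋·D_S]` otherwise. -/
noncomputable def muStar (DS DT : ℕ) (hDS : 0 < DS) (η : ℝ) (μ : Fin DS → ℝ)
    (ζ : Fin (DT % DS) → ℝ) : Fin DT → ℝ :=
  fun i => if h : i.val < DT / DS * DS
    then η * μ ⟨i.val % DS, Nat.mod_lt _ hDS⟩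
    else η * ζ ⟨i.val - DT / DS * DS, sub_lt_mod DS DT i.val hDS i.isLt (not_lt.mp h)⟩

/-! The first `⌊D_T/D_S⌋·D_S` coordinates of `V_avg(x)` run through `x` exactly `⌊D_T/D_S⌋` times
and the remaining ones equal `Avg(x)`. So `V_avg(x)` has the same mean as `x`, and since the tail
is centred it only contributes through the normalisation `1/D_T`: its variance is `η²·Var[x]`.
The LayerNorm denominator therefore picks up the factor `η`, which cancels the `η` in `μ*`; on the
tail the centred input vanishes and only the zero bias of `V_zero(β)` survives. -/

open Finset

lemma sum_range_mul_mod {M : Type*} [AddCommMonoid M] {n : ℕ} (hn : 0 < n) (k : ℕ)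
    (f : Fin n → M) :
    ∑ i ∈ range (k * n), f ⟨i % n, Nat.mod_lt _ hn⟩ = k • ∑ j, f j := by
  rw [← Fin.sum_univ_eq_sum_range (fun i => f ⟨i % n, Nat.mod_lt _ hn⟩),
    ← finProdFinEquiv.sum_comp, Fintype.sum_prod_type]
  simp [Nat.add_mul_mod_self_left, Nat.mod_eq_of_lt]

section Expansion

variable {DS DT : ℕ} (hDS : 0 < DS) (x : Fin DS → ℝ)

lemma sum_comp_vAvg (φ : ℝ → ℝ) :
    ∑ i, φ (vAvg DS DT hDS x i)
      = (DT / DS : ℕ) * ∑ j, φ (x j) + (DT % DS : ℕ) * φ (meanV x) := by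
  change ∑ i : Fin DT, φ (if i.val < DT / DS * DS then x ⟨i.val % DS, Nat.mod_lt _ hDS⟩
    else meanV x) = _
  rw [Fin.sum_univ_eq_sum_range (fun n => φ (if n < DT / DS * DS
      then x ⟨n % DS, Nat.mod_lt _ hDS⟩ else meanV x)),
    show range DT = range (DT / DS * DS + DT % DS) by rw [Nat.div_add_mod'], sum_range_add,
    sum_congr rfl fun n hn => by rw [if_pos (mem_range.mp hn)],
    sum_range_mul_mod hDS _ (fun j => φ (x j))]
  simp only [add_lt_iff_neg_left, not_lt_zero, if_false, sum_const, card_range, nsmul_eq_mul]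

lemma sum_vAvg : ∑ i, vAvg DS DT hDS x i = DT * meanV x := by
  have hsum := sum_comp_vAvg (DT := DT) hDS x id
  have hDT : (DT : ℝ) = (DT / DS : ℕ) * DS + (DT % DS : ℕ) := by
    exact_mod_cast (Nat.div_add_mod' DT DS).symm
  simp only [id] at hsum
  rw [hsum, hDT, meanV]
  field_simp

lemma meanV_vAvg (hDT : 0 < DT) : meanV (vAvg DS DT hDS x) = meanV x := by
  rw [meanV, sum_vAvg, mul_div_cancel_left₀ _ (by positivity)]

lemma eta_sq : eta DS DT ^ 2 = ((DT / DS * DS : ℕ) : ℝ) / DT :=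
  Real.sq_sqrt (by positivity)

lemma eta_pos (h : 0 < DT / DS * DS) : 0 < eta DS DT := by
  have hDT : 0 < DT := h.trans_le (Nat.div_mul_le_self DT DS)
  exact Real.sqrt_pos.mpr (by positivity)

lemma varV_vAvg (hDT : 0 < DT) : varV (vAvg DS DT hDS x) = eta DS DT ^ 2 * varV x := by
  rw [varV, meanV_vAvg hDS x hDT, sum_comp_vAvg hDS x fun t => (t - meanV x) ^ 2, eta_sq, varV]
  push_cast
  field_simp
  ring

lemma sqrt_varV_vAvg_add (hDT : 0 < DT) (ε : ℝ) :
    √(varV (vAvg DS DT hDS x) + eta DS DT ^ 2 * ε) = eta DS DT * √(varV x + ε) := by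
  rw [varV_vAvg hDS x hDT, ← mul_add, Real.sqrt_mul (sq_nonneg _),
    Real.sqrt_sq (x := eta DS DT) (Real.sqrt_nonneg _)]

end Expansion

theorem stmt_3_general (DS DT : ℕ) (hDS : 0 < DS)
    (μ β : Fin DS → ℝ) (ε : ℝ)
    (ζ : Fin (DT % DS) → ℝ) (x : Fin DS → ℝ) :
    layerNorm (vAvg DS DT hDS x) (muStar DS DT hDS (eta DS DT) μ ζ)
        (vZero DS DT hDS β) ((eta DS DT) ^ 2 * ε)
      = vZero DS DT hDS (layerNorm x μ β ε) := by
  funext i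
  have hDT : 0 < DT := i.pos
  simp only [layerNorm, meanV_vAvg hDS x hDT, sqrt_varV_vAvg_add hDS x hDT]
  by_cases hi : i.val < DT / DS * DS
  · have hη := (eta_pos (Nat.zero_lt_of_lt hi)).ne'
    simp only [vAvg, vZero, muStar, hi, if_true, dif_pos]
    rw [mul_assoc, mul_div_mul_left _ _ hη]
    rfl
  · simp [vAvg, vZero, hi, meanV]

/-- lossless expansion for LayerNorm:
`LN(V_avg(x); μ*, V_zero(β), η²·ε) = V_zero(LN(x; μ, β, ε))`. -/
theorem stmt_3 (DS DT : ℕ) (hDS : 0 < DS) (hDT : DS ≤ DT)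
    (μ β : Fin DS → ℝ) (ε : ℝ) (hε : 0 < ε)
    (ζ : Fin (DT % DS) → ℝ) (x : Fin DS → ℝ) :
    layerNorm (vAvg DS DT hDS x) (muStar DS DT hDS (eta DS DT) μ ζ)
        (vZero DS DT hDS β) ((eta DS DT) ^ 2 * ε)
      = vZero DS DT hDS (layerNorm x μ β ε) :=
  stmt_3_general DS DT hDS μ β ε ζ x
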